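/- Let G = (V,E) be a finite undirected graph, let R, S ⊆ V, let u1, u2 ∈ R∩S, let v1, v2 ∈ S, and let u ∈ R. If G contains a (u1u;v1u2)-linkage, a (uu2;u1v1)-linkage, a (uu1;u2v2)-linkage, and a (uu2;u1v2)-linkage, then c(u1u2;v1v2) ∈ P(G;R,S). -/

import Mathlib

open TensorProduct

noncomputable section

/-- The tensor square of the free ℤ-module on `V`, i.e. ℤ⟨V⟩ ⊗ ℤ⟨V⟩. -/
abbrev TT (V : Type*) := (V →₀ ℤ) ⊗[ℤ] (V →₀ ℤ)

/-- The generator of ℤ⟨V⟩ corresponding to `v`. -/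
def unitv {V : Type*} (v : V) : V →₀ ℤ := Finsupp.single v 1

/-- The tensor c(u1u2; v1v2) = (u1 − u2) ⊗ (v1 − v2). -/
def cPair {V : Type*} (u1 u2 v1 v2 : V) : TT V :=
  (unitv u1 - unitv u2) ⊗ₜ[ℤ] (unitv v1 - unitv v2)

/-- The tensor c(u1,u2,u3) = u1⊗u2 − u1⊗u3 + u2⊗u3 − u2⊗u1 + u3⊗u1 − u3⊗u2. -/
def cTriple {V : Type*} (u1 u2 u3 : V) : TT V :=
  unitv u1 ⊗ₜ[ℤ] unitv u2 - unitv u1 ⊗ₜ[ℤ] unitv u3 + unitv u2 ⊗ₜ[ℤ] unitv u3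
    - unitv u2 ⊗ₜ[ℤ] unitv u1 + unitv u3 ⊗ₜ[ℤ] unitv u1 - unitv u3 ⊗ₜ[ℤ] unitv u2

/-- The coefficient c(r⊗s) of an element of ℤ⟨V⟩ ⊗ ℤ⟨V⟩ at the basis element r⊗s. -/
def coeff {V : Type*} (x : TT V) (r s : V) : ℤ := finsuppTensorFinsupp' ℤ V V x (r, s)

/-- A (ab; cd)-linkage in `G`: a pair of vertex-disjoint paths, one connecting `a` and `b`,
the other connecting `c` and `d`. -/
def IsLinkage {V : Type*} (G : SimpleGraph V) (a b c d : V) : Prop :=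
  ∃ (P : G.Walk a b) (Q : G.Walk c d), P.IsPath ∧ Q.IsPath ∧
    ∀ x, x ∈ P.support → x ∉ Q.support

/-- P(G; R, S): the ℤ-span of all ∂P₁ ⊗ ∂P₂ over (R;S)-linkages (P₁,P₂) of `G`.
Note ∂P₁ ⊗ ∂P₂ = (b − a) ⊗ (d − c) = cPair b a d c for a linkage joining a,b ∈ R and
c,d ∈ S; since all endpoint choices and orientations occur, the set below is exactly
the set of these tensors. -/
def PSpan {V : Type*} (G : SimpleGraph V) (R S : Finset V) : Submodule ℤ (TT V) :=
  Submodule.span ℤ {x | ∃ a b c d, a ∈ R ∧ b ∈ R ∧ c ∈ S ∧ d ∈ S ∧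
    IsLinkage G a b c d ∧ x = cPair a b c d}

/- Expanding the tensors bilinearly gives
c(u1u2;v1v2) = c(u1u;v1u2) − c(uu2;u1v1) − c(uu1;u2v2) + c(uu2;u1v2),
and each term on the right is ∂P₁ ⊗ ∂P₂ for one of the four given (R;S)-linkages. -/

theorem cPair_mem_PSpan {V : Type*} {G : SimpleGraph V} {R S : Finset V} {a b c d : V}
    (ha : a ∈ R) (hb : b ∈ R) (hc : c ∈ S) (hd : d ∈ S) (hl : IsLinkage G a b c d) :
    cPair a b c d ∈ PSpan G R S :=
  Submodule.subset_span ⟨a, b, c, d, ha, hb, hc, hd, hl, rfl⟩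

theorem cPair_eq_sub_sub_add {V : Type*} (u1 u2 v1 v2 u : V) :
    cPair u1 u2 v1 v2 =
      cPair u1 u v1 u2 - cPair u u2 u1 v1 - cPair u u1 u2 v2 + cPair u u2 u1 v2 := by
  simp only [cPair, tmul_sub, sub_tmul]
  abel

theorem stmt4_general {V : Type*} [DecidableEq V] (G : SimpleGraph V) (R S : Finset V)
    (u1 u2 v1 v2 u : V)
    (hu1 : u1 ∈ R ∩ S) (hu2 : u2 ∈ R ∩ S) (hv1 : v1 ∈ S) (hv2 : v2 ∈ S) (hu : u ∈ R)
    (h1 : IsLinkage G u1 u v1 u2) (h2 : IsLinkage G u u2 u1 v1)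
    (h3 : IsLinkage G u u1 u2 v2) (h4 : IsLinkage G u u2 u1 v2) :
    cPair u1 u2 v1 v2 ∈ PSpan G R S := by
  obtain ⟨hu1R, hu1S⟩ := Finset.mem_inter.mp hu1
  obtain ⟨hu2R, hu2S⟩ := Finset.mem_inter.mp hu2
  rw [cPair_eq_sub_sub_add u1 u2 v1 v2 u]
  refine add_mem (sub_mem (sub_mem ?_ ?_) ?_) ?_
  · exact cPair_mem_PSpan hu1R hu hv1 hu2S h1
  · exact cPair_mem_PSpan hu hu2R hu1S hv1 h2
  · exact cPair_mem_PSpan hu hu1R hu2S hv2 h3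
  · exact cPair_mem_PSpan hu hu2R hu1S hv2 h4

theorem stmt4 {V : Type*} [Fintype V] [DecidableEq V] (G : SimpleGraph V) (R S : Finset V)
    (u1 u2 v1 v2 u : V)
    (hu1 : u1 ∈ R ∩ S) (hu2 : u2 ∈ R ∩ S) (hv1 : v1 ∈ S) (hv2 : v2 ∈ S) (hu : u ∈ R)
    (h1 : IsLinkage G u1 u v1 u2) (h2 : IsLinkage G u u2 u1 v1)
    (h3 : IsLinkage G u u1 u2 v2) (h4 : IsLinkage G u u2 u1 v2) :
    cPair u1 u2 v1 v2 ∈ PSpan G R S :=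
  stmt4_general G R S u1 u2 v1 v2 u hu1 hu2 hv1 hv2 hu h1 h2 h3 h4
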